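/- arXiv:1309.3115 — 3 statements merged into one kernel-verified Lean document; each statement's English description precedes it below -/
import Mathlib

section
/- Let s > 1/2, σ > 1/2, c ≠ 0, and T > 0. Then there exists a constant C, depending only on s, σ, and 1/|c| (and not on ρ or T), such that for all ρ > 0, ∫₀^T |(1+|·|²)^{-σ} (1+|· - (c/ρ) t|²)^{-σ}|_{H^s} dt ≤ C ρ. In particular the integral is uniformly bounded with respect to 1/ρ and T. -/
open MeasureTheory ENNReal

/-- The `H^s(ℝ)` Sobolev norm of a complex-valued function, defined via the
Fourier transform: `‖f‖_{H^s} = ‖(1+ξ²)^{s/2} 𝓕f(ξ)‖_{L²}`. -/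
noncomputable def sobolevNorm (s : ℝ) (f : ℝ → ℂ) : ℝ≥0∞ :=
  eLpNorm (fun ξ : ℝ => ((1 + ξ ^ 2) ^ (s / 2) : ℝ) • FourierTransform.fourier f ξ) 2 volume

/-- The `H^s(ℝ)` Sobolev norm of a real-valued function. -/
noncomputable def sobolevNormR (s : ℝ) (f : ℝ → ℝ) : ℝ≥0∞ :=
  sobolevNorm s (fun x => (f x : ℂ))

/-!
Write `w x = (1 + x ^ 2) ^ (-σ)` and `y = (c / ρ) t`. Every derivative of `w` is bounded by a
multiple of `w`, so by Leibniz every derivative of `x ↦ w x * w (x - y)` is bounded by a multiple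
of the product itself, whose integral is `O(w y)` by the Peetre-type inequality
`w x * w (x - y) ≤ 4 ^ σ * w y * (w x + w (x - y))`. Hence the Fourier transform of the product
decays like `(1 + ξ ^ 2) ^ (-N) * w y` for every `N`, and its `H^s` norm is `O(w y)` for any `s`.
Integrating in `t`, `∫ w ((c / ρ) t) dt = (ρ / |c|) ∫ w`, which is finite because `2σ > 1`.
-/

open Real Polynomial FourierTransform

theorem contDiff_one_add_sq_rpow (τ : ℝ) : ContDiff ℝ ⊤ fun x : ℝ => (1 + x ^ 2) ^ τ :=
  (contDiff_const.add (contDiff_id.pow 2)).rpow_const_of_ne fun x => by positivity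

theorem exists_iteratedDeriv_one_add_sq_rpow_eq (τ : ℝ) (n : ℕ) :
    ∃ p : ℝ[X], p.natDegree ≤ n ∧ ∀ x : ℝ,
      iteratedDeriv n (fun x : ℝ => (1 + x ^ 2) ^ τ) x = p.eval x * (1 + x ^ 2) ^ (τ - n) := by
  induction n with
  | zero => exact ⟨1, by simp, by simp⟩
  | succ n ih =>
    obtain ⟨p, hdeg, hp⟩ := ih
    refine ⟨derivative p * (1 + X ^ 2) + C (2 * (τ - n)) * (X * p), ?_, fun x => ?_⟩
    · have hderiv : (derivative p * (1 + X ^ 2)).natDegree ≤ n + 1 := by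
        rcases eq_or_ne p.natDegree 0 with h0 | h0
        · simp [derivative_of_natDegree_zero h0]
        · have h1 := natDegree_derivative_lt h0
          have h2 : (1 + X ^ 2 : ℝ[X]).natDegree ≤ 2 := by compute_degree
          exact natDegree_mul_le.trans (by omega)
      have hX : (C (2 * (τ - n)) * (X * p)).natDegree ≤ n + 1 :=
        natDegree_C_mul_le _ _ |>.trans <| natDegree_mul_le.trans (by simp; omega)
      exact natDegree_add_le_of_degree_le hderiv hX
    · have hpos : 0 < 1 + x ^ 2 := by positivity
      have hbase : HasDerivAt (fun x : ℝ => 1 + x ^ 2) (2 * x) x := by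
        simpa using (hasDerivAt_pow 2 x).const_add 1
      have hrpow := (hasDerivAt_rpow_const (p := τ - n) (Or.inl hpos.ne')).comp x hbase
      have hprod : HasDerivAt (fun x : ℝ => p.eval x * (1 + x ^ 2) ^ (τ - n)) _ x :=
        (p.hasDerivAt x).mul hrpow
      rw [iteratedDeriv_succ, funext hp, hprod.deriv]
      have hsplit : (1 + x ^ 2) ^ (τ - n) = (1 + x ^ 2) ^ (τ - n - 1) * (1 + x ^ 2) := by
        rw [← rpow_add_one hpos.ne']; ring_nf
      rw [hsplit, show τ - ((n + 1 : ℕ) : ℝ) = τ - n - 1 by push_cast; ring]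
      simp only [eval_add, eval_mul, eval_one, eval_pow, eval_X, eval_C]
      ring

theorem abs_le_one_add_sq (x : ℝ) : |x| ≤ 1 + x ^ 2 := by
  nlinarith [sq_abs x, sq_nonneg (|x| - 1)]

theorem abs_eval_le_of_natDegree_le {p : ℝ[X]} {n : ℕ} (hp : p.natDegree ≤ n) (x : ℝ) :
    |p.eval x| ≤ (∑ k ∈ Finset.range (n + 1), |p.coeff k|) * (1 + x ^ 2) ^ n := by
  rw [eval_eq_sum_range' (Nat.lt_succ_of_le hp), Finset.sum_mul]
  refine (Finset.abs_sum_le_sum_abs _ _).trans (Finset.sum_le_sum fun k hk => ?_)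
  rw [abs_mul, abs_pow]
  gcongr
  calc |x| ^ k ≤ (1 + x ^ 2) ^ k := by gcongr; exact abs_le_one_add_sq x
    _ ≤ (1 + x ^ 2) ^ n :=
      pow_le_pow_right₀ (by nlinarith [sq_nonneg x]) (Nat.lt_succ_iff.1 (Finset.mem_range.1 hk))

theorem exists_norm_iteratedDeriv_one_add_sq_rpow_le (τ : ℝ) (n : ℕ) :
    ∃ C, 0 ≤ C ∧ ∀ x : ℝ,
      ‖iteratedDeriv n (fun x : ℝ => (1 + x ^ 2) ^ τ) x‖ ≤ C * (1 + x ^ 2) ^ τ := by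
  obtain ⟨p, hdeg, hp⟩ := exists_iteratedDeriv_one_add_sq_rpow_eq τ n
  refine ⟨∑ k ∈ Finset.range (n + 1), |p.coeff k|, by positivity, fun x => ?_⟩
  have hpos : 0 < 1 + x ^ 2 := by positivity
  rw [hp, norm_mul, Real.norm_eq_abs, Real.norm_of_nonneg (by positivity)]
  calc |p.eval x| * (1 + x ^ 2) ^ (τ - n)
      ≤ (∑ k ∈ Finset.range (n + 1), |p.coeff k|) * (1 + x ^ 2) ^ n * (1 + x ^ 2) ^ (τ - n) := by
        gcongr; exact abs_eval_le_of_natDegree_le hdeg x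
    _ = (∑ k ∈ Finset.range (n + 1), |p.coeff k|) * (1 + x ^ 2) ^ τ := by
        rw [mul_assoc, ← Real.rpow_natCast, ← rpow_add hpos]; ring_nf

theorem integrable_one_add_sq_rpow_neg {σ : ℝ} (hσ : 1 / 2 < σ) :
    Integrable fun x : ℝ => (1 + x ^ 2) ^ (-σ) := by
  have := integrable_rpow_neg_one_add_norm_sq (E := ℝ) (μ := volume) (r := 2 * σ)
    (by simp; linarith)
  simpa [show -(2 * σ) / 2 = -σ by ring] using this

theorem rpow_neg_le_of_le_mul {σ a b k : ℝ} (hσ : 0 ≤ σ) (ha : 0 < a) (hb : 0 < b) (hk : 0 < k)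
    (hba : b ≤ k * a) : a ^ (-σ) ≤ k ^ σ * b ^ (-σ) := by
  calc a ^ (-σ) = k ^ σ * (k * a) ^ (-σ) := by
        rw [mul_rpow hk.le ha.le, rpow_neg hk.le, ← mul_assoc, mul_inv_cancel₀ (by positivity),
          one_mul]
    _ ≤ k ^ σ * b ^ (-σ) :=
      mul_le_mul_of_nonneg_left (rpow_le_rpow_of_nonpos hb hba (neg_nonpos.2 hσ)) (by positivity)

theorem norm_iteratedDeriv_mul_le {f g : ℝ → ℝ} (hf : ContDiff ℝ ⊤ f) (hg : ContDiff ℝ ⊤ g)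
    (n : ℕ) (x : ℝ) :
    ‖iteratedDeriv n (fun y => f y * g y) x‖ ≤ ∑ i ∈ Finset.range (n + 1),
      (n.choose i : ℝ) * ‖iteratedDeriv i f x‖ * ‖iteratedDeriv (n - i) g x‖ := by
  simpa only [norm_iteratedFDeriv_eq_norm_iteratedDeriv] using
    norm_iteratedFDeriv_mul_le hf hg x le_top

theorem norm_iteratedDeriv_ofReal_comp {f : ℝ → ℝ} (hf : ContDiff ℝ ⊤ f) (n : ℕ) (x : ℝ) :
    ‖iteratedDeriv n (fun y => (f y : ℂ)) x‖ = ‖iteratedDeriv n f x‖ := by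
  have h := Complex.ofRealLI.norm_iteratedFDeriv_comp_left (hf.contDiffAt (x := x)) (i := n) le_top
  rw [norm_iteratedFDeriv_eq_norm_iteratedDeriv, norm_iteratedFDeriv_eq_norm_iteratedDeriv] at h
  exact h

noncomputable def weightProduct (σ y : ℝ) (x : ℝ) : ℝ :=
  (1 + x ^ 2) ^ (-σ) * (1 + (x - y) ^ 2) ^ (-σ)

theorem contDiff_weightProduct (σ y : ℝ) : ContDiff ℝ ⊤ (weightProduct σ y) :=
  (contDiff_one_add_sq_rpow _).mul
    ((contDiff_one_add_sq_rpow _).comp (contDiff_id.sub contDiff_const))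

theorem exists_norm_iteratedDeriv_weightProduct_le (σ : ℝ) (n : ℕ) :
    ∃ D, 0 ≤ D ∧ ∀ y x : ℝ, ‖iteratedDeriv n (weightProduct σ y) x‖ ≤ D * weightProduct σ y x := by
  choose C hC0 hC using exists_norm_iteratedDeriv_one_add_sq_rpow_le (-σ)
  refine ⟨∑ i ∈ Finset.range (n + 1), (n.choose i : ℝ) * C i * C (n - i),
    Finset.sum_nonneg fun i _ => by have := hC0 i; have := hC0 (n - i); positivity,
    fun y x => ?_⟩
  have hshift : ∀ k, iteratedDeriv k (fun x : ℝ => (1 + (x - y) ^ 2) ^ (-σ)) x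
      = iteratedDeriv k (fun x : ℝ => (1 + x ^ 2) ^ (-σ)) (x - y) := fun k =>
    congrFun (iteratedDeriv_comp_sub_const k (fun x : ℝ => (1 + x ^ 2) ^ (-σ)) y) x
  refine (norm_iteratedDeriv_mul_le (contDiff_one_add_sq_rpow _)
    ((contDiff_one_add_sq_rpow _).comp (contDiff_id.sub contDiff_const)) n x).trans ?_
  rw [Finset.sum_mul]
  refine Finset.sum_le_sum fun i _ => ?_
  have := hC0 i
  calc (n.choose i : ℝ) * ‖iteratedDeriv i (fun x : ℝ => (1 + x ^ 2) ^ (-σ)) x‖ *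
        ‖iteratedDeriv (n - i) (fun x : ℝ => (1 + (x - y) ^ 2) ^ (-σ)) x‖
      ≤ n.choose i * (C i * (1 + x ^ 2) ^ (-σ)) * (C (n - i) * (1 + (x - y) ^ 2) ^ (-σ)) := by
        rw [hshift]; gcongr; exacts [hC i x, hC (n - i) (x - y)]
    _ = n.choose i * C i * C (n - i) * weightProduct σ y x := by
        rw [weightProduct]; ring

theorem weightProduct_le {σ : ℝ} (hσ : 0 ≤ σ) (y x : ℝ) :
    weightProduct σ y x
      ≤ 4 ^ σ * (1 + y ^ 2) ^ (-σ) * ((1 + x ^ 2) ^ (-σ) + (1 + (x - y) ^ 2) ^ (-σ)) := by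
  rw [weightProduct]
  have hx : 0 ≤ (1 + x ^ 2) ^ (-σ) := by positivity
  have hxy : 0 ≤ (1 + (x - y) ^ 2) ^ (-σ) := by positivity
  -- `y ^ 2 ≤ 2 x ^ 2 + 2 (x - y) ^ 2`, so the smaller factor is at most `4 ^ σ` times the weight at `y`
  rcases le_total (y ^ 2) (4 * x ^ 2) with h | h
  · have := rpow_neg_le_of_le_mul hσ (by positivity) (by positivity) (by norm_num : (0:ℝ) < 4)
      (show 1 + y ^ 2 ≤ 4 * (1 + x ^ 2) by linarith)
    nlinarith [mul_le_mul_of_nonneg_right this hxy]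
  · have := rpow_neg_le_of_le_mul hσ (by positivity) (by positivity) (by norm_num : (0:ℝ) < 4)
      (show 1 + y ^ 2 ≤ 4 * (1 + (x - y) ^ 2) by nlinarith [sq_nonneg (2 * x - y)])
    nlinarith [mul_le_mul_of_nonneg_left this hx]

theorem integrable_weightProduct {σ : ℝ} (hσ : 1 / 2 < σ) (y : ℝ) :
    Integrable (weightProduct σ y) := by
  refine (((integrable_one_add_sq_rpow_neg hσ).add
    ((integrable_one_add_sq_rpow_neg hσ).comp_sub_right y)).const_mul
    (4 ^ σ * (1 + y ^ 2) ^ (-σ))).mono'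
    (contDiff_weightProduct σ y).continuous.aestronglyMeasurable (.of_forall fun x => ?_)
  rw [Real.norm_of_nonneg (by unfold weightProduct; positivity)]
  exact weightProduct_le (by linarith) y x

theorem integral_weightProduct_le {σ : ℝ} (hσ : 1 / 2 < σ) (y : ℝ) :
    ∫ x, weightProduct σ y x ≤ 2 * 4 ^ σ * (∫ x : ℝ, (1 + x ^ 2) ^ (-σ)) * (1 + y ^ 2) ^ (-σ) := by
  have hw := integrable_one_add_sq_rpow_neg hσ
  have hwy := hw.comp_sub_right y
  calc ∫ x, weightProduct σ y x
      ≤ ∫ x : ℝ, 4 ^ σ * (1 + y ^ 2) ^ (-σ) * ((1 + x ^ 2) ^ (-σ) + (1 + (x - y) ^ 2) ^ (-σ)) :=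
        integral_mono (integrable_weightProduct hσ y) ((hw.add hwy).const_mul _)
          (weightProduct_le (by linarith) y)
    _ = 2 * 4 ^ σ * (∫ x : ℝ, (1 + x ^ 2) ^ (-σ)) * (1 + y ^ 2) ^ (-σ) := by
        rw [integral_const_mul, integral_add hw hwy,
          integral_sub_right_eq_self (fun x : ℝ => (1 + x ^ 2) ^ (-σ)) y]
        ring

theorem exists_integral_norm_iteratedDeriv_weightProduct_le {σ : ℝ} (hσ : 1 / 2 < σ) (n : ℕ) :
    ∃ A, 0 ≤ A ∧ ∀ y : ℝ, Integrable (iteratedDeriv n fun x => (weightProduct σ y x : ℂ)) ∧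
      ∫ x, ‖iteratedDeriv n (fun x => (weightProduct σ y x : ℂ)) x‖ ≤ A * (1 + y ^ 2) ^ (-σ) := by
  obtain ⟨D, hD0, hD⟩ := exists_norm_iteratedDeriv_weightProduct_le σ n
  have hI : 0 ≤ ∫ x : ℝ, (1 + x ^ 2) ^ (-σ) := integral_nonneg fun x => by positivity
  refine ⟨D * (2 * 4 ^ σ * ∫ x : ℝ, (1 + x ^ 2) ^ (-σ)), by positivity, fun y => ?_⟩
  have hcont : ContDiff ℝ ⊤ fun x => (weightProduct σ y x : ℂ) :=
    Complex.ofRealCLM.contDiff.comp (contDiff_weightProduct σ y)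
  have hdom : ∀ x, ‖iteratedDeriv n (fun x => (weightProduct σ y x : ℂ)) x‖
      ≤ D * weightProduct σ y x := fun x =>
    (norm_iteratedDeriv_ofReal_comp (contDiff_weightProduct σ y) n x).trans_le (hD y x)
  have hint : Integrable (iteratedDeriv n fun x => (weightProduct σ y x : ℂ)) :=
    ((integrable_weightProduct hσ y).const_mul D).mono'
      (hcont.continuous_iteratedDeriv n le_top).aestronglyMeasurable (.of_forall hdom)
  refine ⟨hint, ?_⟩
  calc ∫ x, ‖iteratedDeriv n (fun x => (weightProduct σ y x : ℂ)) x‖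
      ≤ ∫ x, D * weightProduct σ y x :=
        integral_mono hint.norm ((integrable_weightProduct hσ y).const_mul D) hdom
    _ = D * ∫ x, weightProduct σ y x := integral_const_mul _ _
    _ ≤ D * (2 * 4 ^ σ * (∫ x : ℝ, (1 + x ^ 2) ^ (-σ)) * (1 + y ^ 2) ^ (-σ)) := by
        gcongr; exact integral_weightProduct_le hσ y
    _ = D * (2 * 4 ^ σ * ∫ x : ℝ, (1 + x ^ 2) ^ (-σ)) * (1 + y ^ 2) ^ (-σ) := by ring

section FourierDecay

variable {E : Type*} [NormedAddCommGroup E] [NormedSpace ℂ E]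

theorem abs_pow_mul_norm_fourier_le {f : ℝ → E} {n : ℕ} (hf : ContDiff ℝ n f)
    (hint : ∀ k : ℕ, k ≤ n → Integrable (iteratedDeriv k f)) (ξ : ℝ) :
    |ξ| ^ n * ‖𝓕 f ξ‖ ≤ ∫ x, ‖iteratedDeriv n f x‖ := by
  have hderiv := congrFun (Real.fourier_iteratedDeriv (N := n) hf (by exact_mod_cast hint) le_rfl) ξ
  have hnorm : ‖𝓕 (iteratedDeriv n f) ξ‖ ≤ ∫ x, ‖iteratedDeriv n f x‖ := by
    rw [Real.fourier_real_eq]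
    exact (norm_integral_le_integral_norm _).trans_eq (by simp_rw [Circle.norm_smul])
  calc |ξ| ^ n * ‖𝓕 f ξ‖ ≤ (2 * π * |ξ|) ^ n * ‖𝓕 f ξ‖ := by
        gcongr; nlinarith [abs_nonneg ξ, pi_gt_three]
    _ = ‖𝓕 (iteratedDeriv n f) ξ‖ := by
        rw [hderiv, norm_smul, norm_pow]
        simp [Complex.norm_real, abs_of_pos pi_pos]
    _ ≤ ∫ x, ‖iteratedDeriv n f x‖ := hnorm

theorem one_add_sq_pow_mul_norm_fourier_le {f : ℝ → E} (hf : ContDiff ℝ ⊤ f)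
    (hint : ∀ k, Integrable (iteratedDeriv k f)) (N : ℕ) (ξ : ℝ) :
    (1 + ξ ^ 2) ^ N * ‖𝓕 f ξ‖
      ≤ ∑ k ∈ Finset.range (N + 1), (N.choose k : ℝ) * ∫ x, ‖iteratedDeriv (2 * k) f x‖ := by
  rw [add_comm, add_pow, Finset.sum_mul]
  refine Finset.sum_le_sum fun k _ => ?_
  have hk := abs_pow_mul_norm_fourier_le (n := 2 * k) (hf.of_le le_top) (fun j _ => hint j) ξ
  rw [pow_mul, sq_abs] at hk
  calc (ξ ^ 2) ^ k * 1 ^ (N - k) * N.choose k * ‖𝓕 f ξ‖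
      = N.choose k * ((ξ ^ 2) ^ k * ‖𝓕 f ξ‖) := by ring
    _ ≤ _ := by gcongr

end FourierDecay

theorem sobolevNorm_toReal_le_of_fourier_decay {f : ℝ → ℂ} {s K : ℝ} {N : ℕ}
    (hN : s / 2 + 1 ≤ N) (hK : ∀ ξ, (1 + ξ ^ 2) ^ N * ‖𝓕 f ξ‖ ≤ K) :
    (sobolevNorm s f).toReal
      ≤ (eLpNorm (fun ξ : ℝ => (1 + ξ ^ 2) ^ (-1 : ℝ)) 2 volume).toReal * K := by
  have hK0 : 0 ≤ K := (by positivity : (0 : ℝ) ≤ (1 + 0 ^ 2) ^ N * ‖𝓕 f 0‖).trans (hK 0)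
  have hL2 : MemLp (fun ξ : ℝ => (1 + ξ ^ 2) ^ (-1 : ℝ)) 2 volume := by
    refine (memLp_two_iff_integrable_sq
      (contDiff_one_add_sq_rpow _).continuous.aestronglyMeasurable).2 ?_
    refine (integrable_one_add_sq_rpow_neg (σ := 2) (by norm_num)).congr (.of_forall fun ξ => ?_)
    dsimp only
    rw [← Real.rpow_natCast ((1 + ξ ^ 2) ^ (-1 : ℝ)) 2, ← Real.rpow_mul (by positivity)]
    norm_num
  have hpt : ∀ ξ : ℝ, ‖((1 + ξ ^ 2) ^ (s / 2) : ℝ) • 𝓕 f ξ‖ ≤ K * ‖(1 + ξ ^ 2) ^ (-1 : ℝ)‖ := by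
    intro ξ
    have hpos : 0 < 1 + ξ ^ 2 := by positivity
    rw [norm_smul, Real.norm_of_nonneg (by positivity : (0 : ℝ) ≤ (1 + ξ ^ 2) ^ (s / 2)),
      Real.norm_of_nonneg (by positivity : (0 : ℝ) ≤ (1 + ξ ^ 2) ^ (-1 : ℝ))]
    calc (1 + ξ ^ 2) ^ (s / 2) * ‖𝓕 f ξ‖
        = (1 + ξ ^ 2) ^ (s / 2 - N) * ((1 + ξ ^ 2) ^ N * ‖𝓕 f ξ‖) := by
          rw [← mul_assoc, ← Real.rpow_natCast (1 + ξ ^ 2) N, ← rpow_add hpos, sub_add_cancel]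
      _ ≤ (1 + ξ ^ 2) ^ (-1 : ℝ) * K := by
          gcongr
          · exact le_add_of_nonneg_right (sq_nonneg ξ)
          · linarith
          · exact hK ξ
      _ = K * (1 + ξ ^ 2) ^ (-1 : ℝ) := mul_comm _ _
  calc (sobolevNorm s f).toReal
      ≤ (ENNReal.ofReal K * eLpNorm (fun ξ : ℝ => (1 + ξ ^ 2) ^ (-1 : ℝ)) 2 volume).toReal :=
        ENNReal.toReal_mono (ENNReal.mul_ne_top ofReal_ne_top hL2.eLpNorm_ne_top)
          (eLpNorm_le_mul_eLpNorm_of_ae_le_mul (.of_forall hpt) 2)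
    _ = _ := by rw [ENNReal.toReal_mul, ENNReal.toReal_ofReal hK0, mul_comm]

theorem exists_sobolevNormR_weightProduct_le (s : ℝ) {σ : ℝ} (hσ : 1 / 2 < σ) :
    ∃ M, 0 ≤ M ∧ ∀ y : ℝ,
      (sobolevNormR s (weightProduct σ y)).toReal ≤ M * (1 + y ^ 2) ^ (-σ) := by
  set N := ⌈s / 2⌉₊ + 1
  have hN : s / 2 + 1 ≤ N := by push_cast [N]; linarith [Nat.le_ceil (s / 2)]
  choose A hA0 hA using exists_integral_norm_iteratedDeriv_weightProduct_le hσ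
  set B := ∑ k ∈ Finset.range (N + 1), (N.choose k : ℝ) * A (2 * k)
  have hB : 0 ≤ B := Finset.sum_nonneg fun k _ => mul_nonneg (Nat.cast_nonneg _) (hA0 _)
  refine ⟨(eLpNorm (fun ξ : ℝ => (1 + ξ ^ 2) ^ (-1 : ℝ)) 2 volume).toReal * B, by positivity,
    fun y => ?_⟩
  have hdecay : ∀ ξ, (1 + ξ ^ 2) ^ N * ‖𝓕 (fun x => (weightProduct σ y x : ℂ)) ξ‖
      ≤ B * (1 + y ^ 2) ^ (-σ) := fun ξ => by
    refine (one_add_sq_pow_mul_norm_fourier_le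
      (Complex.ofRealCLM.contDiff.comp (contDiff_weightProduct σ y))
      (fun k => (hA k y).1) N ξ).trans ?_
    rw [Finset.sum_mul]
    refine Finset.sum_le_sum fun k _ => ?_
    rw [mul_assoc]
    exact mul_le_mul_of_nonneg_left (hA (2 * k) y).2 (Nat.cast_nonneg _)
  exact (sobolevNorm_toReal_le_of_fourier_decay hN hdecay).trans_eq (mul_assoc _ _ _).symm

theorem setIntegral_le_of_le_comp_mul {F φ : ℝ → ℝ} {a : ℝ} (ha : a ≠ 0) (hφ : Integrable φ)
    (hφ0 : ∀ t, 0 ≤ φ t) (hF0 : ∀ t, 0 ≤ F t) (hF : ∀ t, F t ≤ φ (a * t)) (S : Set ℝ) :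
    ∫ t in S, F t ≤ |a⁻¹| * ∫ t, φ t := by
  have hφa : Integrable fun t => φ (a * t) := hφ.comp_mul_left' ha
  calc ∫ t in S, F t ≤ ∫ t in S, φ (a * t) :=
        integral_mono_of_nonneg (.of_forall hF0) hφa.integrableOn (.of_forall hF)
    _ ≤ ∫ t, φ (a * t) := setIntegral_le_integral hφa (.of_forall fun t => hφ0 _)
    _ = |a⁻¹| * ∫ t, φ t := by
        rw [Measure.integral_comp_mul_left, smul_eq_mul]

theorem interaction_integral_estimate_general (s σ c : ℝ) (hσ : 1 / 2 < σ)
    (hc : c ≠ 0) :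
    ∃ C : ℝ, 0 < C ∧
      ∀ ρ T : ℝ, 0 < ρ → 0 < T →
        ∫ t in Set.Ioc (0 : ℝ) T,
            (sobolevNormR s (fun x =>
              (1 + x ^ 2) ^ (-σ) * (1 + (x - (c / ρ) * t) ^ 2) ^ (-σ))).toReal
          ≤ C * ρ := by
  obtain ⟨M, hM0, hM⟩ := exists_sobolevNormR_weightProduct_le s hσ
  have hI : 0 ≤ ∫ x : ℝ, (1 + x ^ 2) ^ (-σ) := integral_nonneg fun x => by positivity
  refine ⟨M * (∫ x : ℝ, (1 + x ^ 2) ^ (-σ)) / |c| + 1, by positivity, fun ρ T hρ _ => ?_⟩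
  calc _ ≤ |(c / ρ)⁻¹| * ∫ t : ℝ, M * (1 + t ^ 2) ^ (-σ) :=
        setIntegral_le_of_le_comp_mul (div_ne_zero hc hρ.ne')
          ((integrable_one_add_sq_rpow_neg hσ).const_mul M) (fun t => by positivity)
          (fun t => ENNReal.toReal_nonneg) (fun t => hM (c / ρ * t)) _
    _ = M * (∫ x : ℝ, (1 + x ^ 2) ^ (-σ)) / |c| * ρ := by
        rw [integral_const_mul, inv_div, abs_div, abs_of_pos hρ]
        field_simp
    _ ≤ (M * (∫ x : ℝ, (1 + x ^ 2) ^ (-σ)) / |c| + 1) * ρ := by linarith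

/-- Separation of fast and slow modes: for `s > 1/2`, `σ > 1/2`, `c ≠ 0` there is a
constant `C = C(s, σ, 1/|c|)`, independent of `ρ` and `T`, such that for all `ρ > 0`
and `T > 0`,
`∫₀^T |(1+|·|²)^{-σ} (1+|· - (c/ρ)t|²)^{-σ}|_{H^s} dt ≤ C ρ`. -/
theorem interaction_integral_estimate (s σ c : ℝ) (hs : 1 / 2 < s) (hσ : 1 / 2 < σ)
    (hc : c ≠ 0) :
    ∃ C : ℝ, 0 < C ∧
      ∀ ρ T : ℝ, 0 < ρ → 0 < T →
        ∫ t in Set.Ioc (0 : ℝ) T,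
            (sobolevNormR s (fun x =>
              (1 + x ^ 2) ^ (-σ) * (1 + (x - (c / ρ) * t) ^ 2) ^ (-σ))).toReal
          ≤ C * ρ :=
  interaction_integral_estimate_general s σ c hσ hc
end

section
/- Let 0 < γ < 1 and δ > 0, and set ρ = √((1-γ)/(γ+δ)). Consider the 4×4 matrix L_ρ with rows: (0, 0, (γ-1)/(γ(δ+1)), (γ+δ)/(γ(δ+1))); (0, 0, ρ/(1+δ), ρ/(1+δ)); (0, ρ(γ+δ), 0, 0); (γ(1+δ^{-1}), ρ(δ+γ)/δ, 0, 0). Then for ρ sufficiently small (equivalently γ close to 1), L_ρ has four distinct real eigenvalues λ satisfying λ^f_± = ±√(1+δ^{-1}) + O(ρ²) and λ^s_± = ±ρ + O(ρ³). -/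
/-!
Write `B = 1 + δ⁻¹`. The relation `ρ² (γ + δ) = 1 - γ` turns the characteristic polynomial of
`L_ρ` into `λ⁴ - B λ² + B ρ² / (1 + ρ²)`, a quadratic in `μ = λ²` whose roots `μ_s < μ_f` have
sum `B` and product at most `B ρ²`. Hence `μ_s ≤ 2ρ²` and `μ_f = B - μ_s` is `2ρ²`-close to `B`;
feeding `μ_s ≤ 2ρ²` back into `B (μ_s - ρ²) = μ_s² - B ρ⁴ / (1 + ρ²)` gives `μ_s = ρ² + O(ρ⁴)`.
The eigenvalues are `±√μ_f` and `±√μ_s`, and `|√x - y| ≤ |x - y²| / y` transfers the estimates.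
-/

open Matrix

noncomputable def Lρ (γ δ ρ : ℝ) : Matrix (Fin 4) (Fin 4) ℝ :=
  !![0, 0, (γ - 1) / (γ * (δ + 1)), (γ + δ) / (γ * (δ + 1));
     0, 0, ρ / (1 + δ), ρ / (1 + δ);
     0, ρ * (γ + δ), 0, 0;
     γ * (1 + δ⁻¹), ρ * (δ + γ) / δ, 0, 0]

theorem det_Lρ_sub_smul_one {γ δ ρ : ℝ} (hγ : γ ≠ 0) (hδ : δ ≠ 0) (hδ' : 1 + δ ≠ 0) (l : ℝ) :
    (Lρ γ δ ρ - l • 1).det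
      = l ^ 4 - (γ + δ) * (1 + ρ ^ 2) / δ * l ^ 2 + ρ ^ 2 * (γ + δ) / δ := by
  rw [det_succ_row_zero, Fin.sum_univ_four]
  simp only [det_fin_three, submatrix_apply, Matrix.sub_apply, Matrix.smul_apply, one_apply, Lρ,
    of_apply, Fin.succAbove, Fin.reduceCastSucc, Fin.reduceSucc, Fin.reduceLT, Fin.isValue,
    ite_true, ite_false, cons_val, Fin.reduceEq, Fin.coe_ofNat_eq_mod]
  rw [add_comm 1 δ] at hδ' ⊢
  field_simp
  ring

theorem det_Lρ_sub_smul_one_of_sq_mul {γ δ ρ : ℝ} (hγ : γ ≠ 0) (hδ : 0 < δ)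
    (hρ : ρ ^ 2 * (γ + δ) = 1 - γ) (l : ℝ) :
    (Lρ γ δ ρ - l • 1).det = l ^ 4 - (1 + δ⁻¹) * l ^ 2 + (1 + δ⁻¹) * ρ ^ 2 / (1 + ρ ^ 2) := by
  have hγδ : γ + δ = (1 + δ) / (1 + ρ ^ 2) := by
    rw [eq_div_iff (by positivity)]
    linear_combination hρ
  rw [det_Lρ_sub_smul_one hγ hδ.ne' (by positivity), hγδ]
  field_simp
  ring

theorem Matrix.exists_mulVec_eq_smul_of_det_sub_smul_one_eq_zero {n K : Type*} [Fintype n]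
    [DecidableEq n] [Field K] {A : Matrix n n K} {l : K} (h : (A - l • 1).det = 0) :
    ∃ v ≠ 0, A *ᵥ v = l • v := by
  obtain ⟨v, hv, hAv⟩ := exists_mulVec_eq_zero_iff.mpr h
  refine ⟨v, hv, sub_eq_zero.mp ?_⟩
  rwa [sub_mulVec, smul_mulVec, one_mulVec] at hAv

theorem abs_sqrt_sub_le {x y : ℝ} (hx : 0 ≤ x) (hy : 0 < y) : |√x - y| ≤ |x - y ^ 2| / y := by
  rw [le_div_iff₀ hy]
  have h : |√x - y| * (√x + y) = |x - y ^ 2| := by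
    rw [← abs_of_nonneg (by positivity : 0 ≤ √x + y), ← abs_mul]
    congr 1
    linear_combination Real.sq_sqrt hx
  calc |√x - y| * y ≤ |√x - y| * (√x + y) := by gcongr; linarith [Real.sqrt_nonneg x]
    _ = |x - y ^ 2| := h

theorem exists_pos_roots_of_discrim_pos {B c : ℝ} (hB : 0 < B) (hc : 0 < c) (h : 4 * c < B ^ 2) :
    ∃ μs μf : ℝ, 0 < μs ∧ μs < μf ∧ μs + μf = B ∧ μs * μf = c := by
  set s := √(B ^ 2 - 4 * c)
  have hs2 : s ^ 2 = B ^ 2 - 4 * c := Real.sq_sqrt (by linarith)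
  have hs : 0 < s := Real.sqrt_pos.mpr (by linarith)
  have hsB : s < B := by nlinarith
  exact ⟨(B - s) / 2, (B + s) / 2, by linarith, by linarith, by ring, by linear_combination -hs2 / 4⟩

section Roots

variable {B ρ μs μf : ℝ}

theorem small_root_le (hB : 0 < B) (hμs : 0 ≤ μs) (hlt : μs < μf) (hsum : μs + μf = B)
    (hprod : μs * μf ≤ B * ρ ^ 2) : μs ≤ 2 * ρ ^ 2 := by
  have : μs * (B / 2) ≤ μs * μf := by gcongr; linarith
  nlinarith

theorem abs_small_root_sub_sq_le (hB : 0 < B) (hμs : 0 ≤ μs) (hlt : μs < μf)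
    (hsum : μs + μf = B) (hprod : μs * μf = B * ρ ^ 2 / (1 + ρ ^ 2)) :
    |μs - ρ ^ 2| ≤ (1 + 4 / B) * ρ ^ 4 := by
  have hle : μs ≤ 2 * ρ ^ 2 := small_root_le hB hμs hlt hsum <| hprod.trans_le <|
    div_le_self (by positivity) (by linarith [sq_nonneg ρ])
  have hquad : B * (μs - ρ ^ 2) = μs ^ 2 - B * ρ ^ 4 / (1 + ρ ^ 2) := by
    rw [← hsum] at hprod ⊢
    field_simp at hprod ⊢
    linear_combination hprod
  have hsq : μs ^ 2 ≤ 4 * ρ ^ 4 := by nlinarith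
  have hdiv : B * ρ ^ 4 / (1 + ρ ^ 2) ≤ B * ρ ^ 4 :=
    div_le_self (by positivity) (by linarith [sq_nonneg ρ])
  calc |μs - ρ ^ 2| = |B * (μs - ρ ^ 2)| / B := by
        rw [abs_mul, abs_of_pos hB, mul_div_cancel_left₀ _ hB.ne']
    _ ≤ (4 * ρ ^ 4 + B * ρ ^ 4) / B := by
        gcongr
        rw [hquad, abs_sub_le_iff]
        constructor <;> linarith [sq_nonneg μs, (by positivity : 0 ≤ B * ρ ^ 4 / (1 + ρ ^ 2)),
          (by positivity : 0 ≤ ρ ^ 4)]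
    _ = (1 + 4 / B) * ρ ^ 4 := by field_simp; ring

theorem exists_roots_with_asymptotics (hB : 0 < B) (hρ : 0 < ρ) (hρB : 4 * ρ ^ 2 < B) :
    ∃ μs μf : ℝ, 0 < μs ∧ μs < μf ∧ μs + μf = B ∧ μs * μf = B * ρ ^ 2 / (1 + ρ ^ 2) ∧
      |√μf - √B| ≤ 2 / √B * ρ ^ 2 ∧ |√μs - ρ| ≤ (1 + 4 / B) * ρ ^ 3 := by
  have hc : 0 < B * ρ ^ 2 / (1 + ρ ^ 2) := by positivity
  have hcle : B * ρ ^ 2 / (1 + ρ ^ 2) ≤ B * ρ ^ 2 :=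
    div_le_self (by positivity) (by linarith [sq_nonneg ρ])
  obtain ⟨μs, μf, hμs, hlt, hsum, hprod⟩ :=
    exists_pos_roots_of_discrim_pos hB hc (by nlinarith)
  refine ⟨μs, μf, hμs, hlt, hsum, hprod, ?_, ?_⟩
  · calc |√μf - √B| ≤ |μf - √B ^ 2| / √B := abs_sqrt_sub_le (by linarith) (by positivity)
      _ = μs / √B := by
        rw [Real.sq_sqrt hB.le, ← hsum, sub_add_cancel_right, abs_neg, abs_of_pos hμs]
      _ ≤ 2 * ρ ^ 2 / √B := by
        gcongr
        exact small_root_le hB hμs.le hlt hsum (hprod.trans_le hcle)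
      _ = 2 / √B * ρ ^ 2 := by ring
  · calc |√μs - ρ| ≤ |μs - ρ ^ 2| / ρ := abs_sqrt_sub_le hμs.le hρ
      _ ≤ (1 + 4 / B) * ρ ^ 4 / ρ := by
        gcongr
        exact abs_small_root_sub_sq_le hB hμs.le hlt hsum hprod
      _ = (1 + 4 / B) * ρ ^ 3 := by field_simp

end Roots

theorem sqrt_div_pos_and_sq_mul {γ δ : ℝ} (hγ : γ < 1) (hγδ : 0 < γ + δ) :
    0 < √((1 - γ) / (γ + δ)) ∧ √((1 - γ) / (γ + δ)) ^ 2 * (γ + δ) = 1 - γ := by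
  have hfrac : 0 < (1 - γ) / (γ + δ) := div_pos (by linarith) hγδ
  exact ⟨Real.sqrt_pos.mpr hfrac, by rw [Real.sq_sqrt hfrac.le, div_mul_cancel₀ _ hγδ.ne']⟩

theorem exists_eigenvector_Lρ {γ δ ρ μs μf l : ℝ} (hγ : γ ≠ 0) (hδ : 0 < δ)
    (hρ : ρ ^ 2 * (γ + δ) = 1 - γ) (hsum : μs + μf = 1 + δ⁻¹)
    (hprod : μs * μf = (1 + δ⁻¹) * ρ ^ 2 / (1 + ρ ^ 2)) (hl : l ^ 2 = μs ∨ l ^ 2 = μf) :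
    ∃ v ≠ 0, Lρ γ δ ρ *ᵥ v = l • v := by
  refine exists_mulVec_eq_smul_of_det_sub_smul_one_eq_zero ?_
  have hdet : (Lρ γ δ ρ - l • 1).det = (l ^ 2 - μs) * (l ^ 2 - μf) := by
    rw [det_Lρ_sub_smul_one_of_sq_mul hγ hδ hρ, ← hprod, ← hsum]
    ring
  rcases hl with h | h <;> simp [hdet, h]

/-- Eigenvalue asymptotics for the linear operator `L_ρ` of the free-surface two-layer
shallow-water system: for `ρ = √((1-γ)/(γ+δ))` sufficiently small, `L_ρ` has four
distinct real eigenvalues `λ^f_± = ±√(1+δ⁻¹) + O(ρ²)` and `λ^s_± = ±ρ + O(ρ³)`. -/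
theorem L_rho_eigenvalues (δ : ℝ) (hδ : 0 < δ) :
    ∃ ρ₀ C : ℝ, 0 < ρ₀ ∧ 0 < C ∧
      ∀ γ ρ : ℝ, 0 < γ → γ < 1 → ρ = Real.sqrt ((1 - γ) / (γ + δ)) → ρ < ρ₀ →
        ∀ L : Matrix (Fin 4) (Fin 4) ℝ,
          L = !![0, 0, (γ - 1) / (γ * (δ + 1)), (γ + δ) / (γ * (δ + 1));
                 0, 0, ρ / (1 + δ), ρ / (1 + δ);
                 0, ρ * (γ + δ), 0, 0;
                 γ * (1 + δ⁻¹), ρ * (δ + γ) / δ, 0, 0] →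
          ∃ lfP lfM lsP lsM : ℝ,
            (lfP ≠ lfM ∧ lfP ≠ lsP ∧ lfP ≠ lsM ∧ lfM ≠ lsP ∧ lfM ≠ lsM ∧ lsP ≠ lsM) ∧
            (∀ l ∈ [lfP, lfM, lsP, lsM], ∃ v : Fin 4 → ℝ, v ≠ 0 ∧ L.mulVec v = l • v) ∧
            |lfP - Real.sqrt (1 + δ⁻¹)| ≤ C * ρ ^ 2 ∧
            |lfM + Real.sqrt (1 + δ⁻¹)| ≤ C * ρ ^ 2 ∧
            |lsP - ρ| ≤ C * ρ ^ 3 ∧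
            |lsM + ρ| ≤ C * ρ ^ 3 := by
  set B := 1 + δ⁻¹
  have hB : 0 < B := by positivity
  refine ⟨√B / 2, 2 / √B + 1 + 4 / B, by positivity, by positivity, ?_⟩
  rintro γ ρ hγ hγ1 hρdef hρ₀ L rfl
  obtain ⟨hρ, hρsq⟩ := hρdef ▸ sqrt_div_pos_and_sq_mul hγ1 (by linarith : 0 < γ + δ)
  have hρB : 4 * ρ ^ 2 < B := by
    have := (Real.lt_sqrt (by positivity)).mp (by linarith : 2 * ρ < √B)
    linarith
  obtain ⟨μs, μf, hμs, hlt, hsum, hprod, hfast, hslow⟩ := exists_roots_with_asymptotics hB hρ hρB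
  have hs : 0 < √μs := Real.sqrt_pos.mpr hμs
  have hsf : √μs < √μf := Real.sqrt_lt_sqrt hμs.le hlt
  have hfast' : |√μf - √B| ≤ (2 / √B + 1 + 4 / B) * ρ ^ 2 :=
    hfast.trans (by gcongr; linarith [(by positivity : 0 < 4 / B)])
  have hslow' : |√μs - ρ| ≤ (2 / √B + 1 + 4 / B) * ρ ^ 3 :=
    hslow.trans (by gcongr; linarith [(by positivity : 0 < 2 / √B)])
  refine ⟨√μf, -√μf, √μs, -√μs, ⟨by linarith, by linarith, by linarith, by linarith, by linarith,
    by linarith⟩, ?_, ?_, ?_, ?_, ?_⟩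
  · simp only [List.mem_cons, List.not_mem_nil, or_false]
    rintro l (rfl | rfl | rfl | rfl) <;> refine exists_eigenvector_Lρ hγ.ne' hδ hρsq hsum hprod ?_
    all_goals simp [Real.sq_sqrt, hμs.le, (hμs.trans hlt).le]
  · exact hfast'
  · rwa [neg_add_eq_sub, abs_sub_comm]
  · exact hslow'
  · rwa [neg_add_eq_sub, abs_sub_comm]
end

section
/- (Conservation of horizontal momentum.) Under the same hypotheses as for the free-surface shallow-water system with ε = 1 and α = ρ = √((1-γ)/(γ+δ)): if (ζ₁,ζ₂,u₁,u₂) is a C¹ solution with h₁ = 1+ρζ₁-ζ₂, h₂ = δ^{-1}+ζ₂, and p = (1/2)(γ((δ+γ)/(1-γ))(h₁+h₂)² + (γ+δ)h₂²), then ∂_t(γh₁u₁ + h₂u₂) + ∂_x p + ∂_x(γh₁u₁² + h₂u₂²) = 0 pointwise. -/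
/-!
Each layer conserves its own mass, `∂ₜhᵢ + ∂ₓ(hᵢuᵢ) = 0`: for the lower layer this is the
second equation, for the upper one the first minus the second, since `h₁ = 1 + ρζ₁ - ζ₂`.
By the product rule `∂ₜ(hu) + ∂ₓ(hu²) = h (∂ₜu + ½∂ₓ(u²)) + u (∂ₜh + ∂ₓ(hu))`, so in the
`γ`-weighted total momentum the mass terms drop out, and the momentum equations multiplied by
`γh₁` and `h₂` turn what is left into `-∂ₓp`, because `∂ₓ(h₁ + h₂) = ρ ∂ₓζ₁` and
`∂ₓh₂ = ∂ₓζ₂`.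
-/

open Function

theorem Differentiable.slices_of_uncurry {𝕜 E F G : Type*} [NontriviallyNormedField 𝕜]
    [NormedAddCommGroup E] [NormedSpace 𝕜 E] [NormedAddCommGroup F] [NormedSpace 𝕜 F]
    [NormedAddCommGroup G] [NormedSpace 𝕜 G] {f : E → F → G}
    (hf : Differentiable 𝕜 (uncurry f)) :
    (∀ y, Differentiable 𝕜 fun x => f x y) ∧ ∀ x, Differentiable 𝕜 (f x) :=
  ⟨fun _ => by fun_prop, fun _ => by fun_prop⟩

theorem layer_momentum_balance {h u : ℝ → ℝ → ℝ} {t x : ℝ}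
    (hht : DifferentiableAt ℝ (fun τ => h τ x) t) (hut : DifferentiableAt ℝ (fun τ => u τ x) t)
    (hhx : DifferentiableAt ℝ (h t) x) (hux : DifferentiableAt ℝ (u t) x) :
    deriv (fun τ => h τ x * u τ x) t + deriv (fun y => h t y * u t y ^ 2) x
      = h t x * (deriv (fun τ => u τ x) t + 1 / 2 * deriv (fun y => u t y ^ 2) x)
        + u t x * (deriv (fun τ => h τ x) t + deriv (fun y => h t y * u t y) x) := by
  simp (disch := fun_prop) only [deriv_fun_mul, deriv_fun_pow]
  ring

theorem two_layer_momentum_balance (γ : ℝ) {h₁ u₁ h₂ u₂ : ℝ → ℝ → ℝ}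
    (hh₁ : Differentiable ℝ (uncurry h₁)) (hu₁ : Differentiable ℝ (uncurry u₁))
    (hh₂ : Differentiable ℝ (uncurry h₂)) (hu₂ : Differentiable ℝ (uncurry u₂)) (t x : ℝ) :
    deriv (fun τ => γ * h₁ τ x * u₁ τ x + h₂ τ x * u₂ τ x) t
        + deriv (fun y => γ * h₁ t y * u₁ t y ^ 2 + h₂ t y * u₂ t y ^ 2) x
      = γ * (h₁ t x * (deriv (fun τ => u₁ τ x) t + 1 / 2 * deriv (fun y => u₁ t y ^ 2) x)
          + u₁ t x * (deriv (fun τ => h₁ τ x) t + deriv (fun y => h₁ t y * u₁ t y) x))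
        + (h₂ t x * (deriv (fun τ => u₂ τ x) t + 1 / 2 * deriv (fun y => u₂ t y ^ 2) x)
          + u₂ t x * (deriv (fun τ => h₂ τ x) t + deriv (fun y => h₂ t y * u₂ t y) x)) := by
  obtain ⟨dh₁t, dh₁x⟩ := hh₁.slices_of_uncurry
  obtain ⟨du₁t, du₁x⟩ := hu₁.slices_of_uncurry
  obtain ⟨dh₂t, dh₂x⟩ := hh₂.slices_of_uncurry
  obtain ⟨du₂t, du₂x⟩ := hu₂.slices_of_uncurry
  simp (disch := fun_prop) only [mul_assoc, deriv_fun_add, deriv_const_mul]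
  linear_combination
    γ * layer_momentum_balance (dh₁t x t) (du₁t x t) (dh₁x t x) (du₁x t x)
      + layer_momentum_balance (dh₂t x t) (du₂t x t) (dh₂x t x) (du₂x t x)

theorem free_surface_momentum_conservation_general (δ γ ρ : ℝ)
    (ζ₁ ζ₂ u₁ u₂ h₁ h₂ p : ℝ → ℝ → ℝ)
    (hreg₁ : ContDiff ℝ 1 (Function.uncurry ζ₁))
    (hreg₂ : ContDiff ℝ 1 (Function.uncurry ζ₂))
    (hreg₃ : ContDiff ℝ 1 (Function.uncurry u₁))
    (hreg₄ : ContDiff ℝ 1 (Function.uncurry u₂))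
    (hh₁ : ∀ t x, h₁ t x = 1 + ρ * ζ₁ t x - ζ₂ t x)
    (hh₂ : ∀ t x, h₂ t x = δ⁻¹ + ζ₂ t x)
    (hp : ∀ t x, p t x = 1 / 2 * (γ * ((δ + γ) / (1 - γ)) * (h₁ t x + h₂ t x) ^ 2
        + (γ + δ) * (h₂ t x) ^ 2))
    (eq₁ : ∀ t x, ρ * deriv (fun τ => ζ₁ τ x) t
        + deriv (fun y => h₁ t y * u₁ t y) x + deriv (fun y => h₂ t y * u₂ t y) x = 0)
    (eq₂ : ∀ t x, deriv (fun τ => ζ₂ τ x) t + deriv (fun y => h₂ t y * u₂ t y) x = 0)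
    (eq₃ : ∀ t x, deriv (fun τ => u₁ τ x) t
        + ρ * ((δ + γ) / (1 - γ)) * deriv (fun y => ζ₁ t y) x
        + 1 / 2 * deriv (fun y => (u₁ t y) ^ 2) x = 0)
    (eq₄ : ∀ t x, deriv (fun τ => u₂ τ x) t
        + (δ + γ) * deriv (fun y => ζ₂ t y) x
        + γ * ρ * ((δ + γ) / (1 - γ)) * deriv (fun y => ζ₁ t y) x
        + 1 / 2 * deriv (fun y => (u₂ t y) ^ 2) x = 0) :
    ∀ t x, deriv (fun τ => γ * h₁ τ x * u₁ τ x + h₂ τ x * u₂ τ x) t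
        + deriv (fun y => p t y) x
        + deriv (fun y => γ * h₁ t y * (u₁ t y) ^ 2 + h₂ t y * (u₂ t y) ^ 2) x = 0 := by
  intro t x
  have H₁ : h₁ = fun t x => 1 + ρ * ζ₁ t x - ζ₂ t x := funext₂ hh₁
  have H₂ : h₂ = fun t x => δ⁻¹ + ζ₂ t x := funext₂ hh₂
  have dζ₁ := hreg₁.differentiable one_ne_zero
  have dζ₂ := hreg₂.differentiable one_ne_zero
  obtain ⟨dζ₁t, dζ₁x⟩ := dζ₁.slices_of_uncurry
  obtain ⟨dζ₂t, dζ₂x⟩ := dζ₂.slices_of_uncurry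
  have mass₁ : deriv (fun τ => h₁ τ x) t + deriv (fun y => h₁ t y * u₁ t y) x = 0 := by
    have dh₁ : deriv (fun τ => h₁ τ x) t
        = ρ * deriv (fun τ => ζ₁ τ x) t - deriv (fun τ => ζ₂ τ x) t := by
      simp (disch := fun_prop) only [H₁, deriv_fun_sub, deriv_const_add, deriv_const_mul]
    linear_combination dh₁ + eq₁ t x - eq₂ t x
  have mass₂ : deriv (fun τ => h₂ τ x) t + deriv (fun y => h₂ t y * u₂ t y) x = 0 := by
    simpa only [H₂, deriv_const_add] using eq₂ t x
  have pressure : deriv (fun y => p t y) x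
      = γ * ((δ + γ) / (1 - γ)) * (h₁ t x + h₂ t x) * (ρ * deriv (fun y => ζ₁ t y) x)
        + (γ + δ) * h₂ t x * deriv (fun y => ζ₂ t y) x := by
    simp (disch := fun_prop) only [hp, H₁, H₂, deriv_fun_add, deriv_fun_sub, deriv_const,
      deriv_const_mul, deriv_fun_pow]
    ring
  have balance := two_layer_momentum_balance γ (h₁ := h₁) (h₂ := h₂)
    (by rw [H₁]; fun_prop) (hreg₃.differentiable one_ne_zero)
    (by rw [H₂]; fun_prop) (hreg₄.differentiable one_ne_zero) t x
  linear_combination balance + pressure + γ * u₁ t x * mass₁ + u₂ t x * mass₂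
    + γ * h₁ t x * eq₃ t x + h₂ t x * eq₄ t x

/-- Conservation of horizontal momentum for the free-surface two-layer
shallow-water system (with `ε = 1`, `α = ρ = √((1-γ)/(γ+δ))`): any `C¹` solution
satisfies the pointwise identity
`∂ₜ(γh₁u₁ + h₂u₂) + ∂ₓp + ∂ₓ(γh₁u₁² + h₂u₂²) = 0`. -/
theorem free_surface_momentum_conservation (δ γ ρ : ℝ)
    (hδ : 0 < δ) (hγ₀ : 0 < γ) (hγ₁ : γ < 1)
    (hρ : ρ = Real.sqrt ((1 - γ) / (γ + δ)))
    (ζ₁ ζ₂ u₁ u₂ h₁ h₂ p : ℝ → ℝ → ℝ)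
    (hreg₁ : ContDiff ℝ 1 (Function.uncurry ζ₁))
    (hreg₂ : ContDiff ℝ 1 (Function.uncurry ζ₂))
    (hreg₃ : ContDiff ℝ 1 (Function.uncurry u₁))
    (hreg₄ : ContDiff ℝ 1 (Function.uncurry u₂))
    (hh₁ : ∀ t x, h₁ t x = 1 + ρ * ζ₁ t x - ζ₂ t x)
    (hh₂ : ∀ t x, h₂ t x = δ⁻¹ + ζ₂ t x)
    (hp : ∀ t x, p t x = 1 / 2 * (γ * ((δ + γ) / (1 - γ)) * (h₁ t x + h₂ t x) ^ 2
        + (γ + δ) * (h₂ t x) ^ 2))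
    (eq₁ : ∀ t x, ρ * deriv (fun τ => ζ₁ τ x) t
        + deriv (fun y => h₁ t y * u₁ t y) x + deriv (fun y => h₂ t y * u₂ t y) x = 0)
    (eq₂ : ∀ t x, deriv (fun τ => ζ₂ τ x) t + deriv (fun y => h₂ t y * u₂ t y) x = 0)
    (eq₃ : ∀ t x, deriv (fun τ => u₁ τ x) t
        + ρ * ((δ + γ) / (1 - γ)) * deriv (fun y => ζ₁ t y) x
        + 1 / 2 * deriv (fun y => (u₁ t y) ^ 2) x = 0)
    (eq₄ : ∀ t x, deriv (fun τ => u₂ τ x) t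
        + (δ + γ) * deriv (fun y => ζ₂ t y) x
        + γ * ρ * ((δ + γ) / (1 - γ)) * deriv (fun y => ζ₁ t y) x
        + 1 / 2 * deriv (fun y => (u₂ t y) ^ 2) x = 0) :
    ∀ t x, deriv (fun τ => γ * h₁ τ x * u₁ τ x + h₂ τ x * u₂ τ x) t
        + deriv (fun y => p t y) x
        + deriv (fun y => γ * h₁ t y * (u₁ t y) ^ 2 + h₂ t y * (u₂ t y) ^ 2) x = 0 :=
  free_surface_momentum_conservation_general δ γ ρ ζ₁ ζ₂ u₁ u₂ h₁ h₂ p hreg₁ hreg₂ hreg₃ hreg₄ hh₁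
    hh₂ hp eq₁ eq₂ eq₃ eq₄
end
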